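/- Assuming subspace independence, if a data matrix X has rows drawn from k independent linear subspaces (so X is block-structured under a suitable permutation), then there exists a block-diagonal matrix Q with zero diagonal satisfying X = QX, provided each subspace contains at least dim+1 sample rows in general position. -/

import Mathlib

/-!
Each row `x_j` lies in the span `U_{g j}` of its group. The group has more than `dim U_{g j}`
rows, so `dim U_{g j}` of them avoid `x_j`, and by general position these already span
`U_{g j}`. Writing `x_j` in terms of them gives row `j` of `Q`, supported on the other rows
of the group.
-/

theorem exists_fun_eq_sum_of_mem_span_image {ι R M : Type*} [Fintype ι] [Semiring R]
    [AddCommMonoid M] [Module R M] {v : ι → M} {s : Set ι} {x : M}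
    (hx : x ∈ Submodule.span R (v '' s)) :
    ∃ c : ι → R, (∀ i ∉ s, c i = 0) ∧ x = ∑ i, c i • v i := by
  obtain ⟨c, hc, rfl⟩ := (Finsupp.mem_span_image_iff_linearCombination R).mp hx
  refine ⟨c, (Finsupp.mem_supported' R c).mp hc, ?_⟩
  rw [Finsupp.linearCombination_apply, Finsupp.sum_fintype _ _ fun i => zero_smul R (v i)]

theorem Matrix.eq_mul_self_of_row_eq_sum {m n α : Type*} [Fintype m]
    [NonUnitalNonAssocSemiring α] {X : Matrix m n α} {Q : Matrix m m α}
    (hQ : ∀ j, X j = ∑ l, Q j l • X l) : X = Q * X :=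
  funext fun j => by rw [Matrix.mul_apply_eq_vecMul, Matrix.vecMul_eq_sum, hQ j]

theorem Finset.exists_subset_erase_card_eq {α : Type*} [DecidableEq α] {t : Finset α} {a : α}
    (ha : a ∈ t) {r : ℕ} (hr : r < t.card) : ∃ s ⊆ t.erase a, s.card = r :=
  Finset.exists_subset_card_eq (by rw [Finset.card_erase_of_mem ha]; omega)

/-- Subspace self-expressiveness: if the rows of `X` are partitioned into groups, the rows
of group `i` spanning a subspace `Uᵢ`, each group has more rows than `dim Uᵢ`, and the rows
are in general position (every `dim Uᵢ` of the rows of a group, other than any fixed row,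
span `Uᵢ`), then there is a block-diagonal matrix `Q` with zero diagonal and `X = QX`. -/
theorem stmt_12 {n d k : ℕ} (X : Matrix (Fin n) (Fin d) ℝ) (g : Fin n → Fin k)
    (U : Fin k → Submodule ℝ (Fin d → ℝ))
    (hU : ∀ i, U i = Submodule.span ℝ ((fun j => X j) '' {j | g j = i}))
    (hcard : ∀ i, Module.finrank ℝ (U i) < (Finset.univ.filter fun j => g j = i).card)
    (hgen : ∀ j : Fin n, ∀ s : Finset (Fin n),
      (∀ l ∈ s, g l = g j ∧ l ≠ j) → s.card = Module.finrank ℝ (U (g j)) →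
        Submodule.span ℝ ((fun l => X l) '' (s : Set (Fin n))) = U (g j)) :
    ∃ Q : Matrix (Fin n) (Fin n) ℝ,
      (∀ j, Q j j = 0) ∧ (∀ j l, g j ≠ g l → Q j l = 0) ∧ X = Q * X := by
  have row : ∀ j, ∃ c : Fin n → ℝ,
      (∀ l, ¬(g l = g j ∧ l ≠ j) → c l = 0) ∧ X j = ∑ l, c l • X l := by
    intro j
    obtain ⟨s, hs, hscard⟩ := Finset.exists_subset_erase_card_eq
      (by simp : j ∈ Finset.univ.filter fun l => g l = g j) (hcard (g j))
    have hs_others : ∀ l ∈ s, g l = g j ∧ l ≠ j := fun l hl => by simpa [and_comm] using hs hl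
    have hXj : X j ∈ Submodule.span ℝ (X '' s) := by
      rw [hgen j s hs_others hscard, hU]
      exact Submodule.subset_span ⟨j, rfl, rfl⟩
    obtain ⟨c, hc, hXc⟩ := exists_fun_eq_sum_of_mem_span_image hXj
    exact ⟨c, fun l hl => hc l (mt (hs_others l) hl), hXc⟩
  choose c hc hXc using row
  exact ⟨Matrix.of c, fun j => hc j j (by simp), fun j l hjl => hc j l fun h => hjl h.1.symm,
    Matrix.eq_mul_self_of_row_eq_sum hXc⟩
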